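/- In the group-extension setting, assume μ₀ ∈ M(T₀) is ergodic with respect to T₀. Then: (1) M(T₁, μ₀) is a convex set; (2) M(T₁, μ₀) is closed in the weak* topology on Borel probability measures on G₁; (3) the extreme points of M(T₁, μ₀) are exactly the measures in M(T₁, μ₀) that are ergodic with respect to T₁. -/

import Mathlib

/-!
Pushforward along `T₁` and along the projection is affine and weak*-continuous, which gives
convexity and closedness. For the extreme points, ergodicity of `μ₀` forces every
`T₁`-invariant probability measure `ν ≪ μ` with `μ ∈ M(T₁, μ₀)` into `M(T₁, μ₀)`: its projection
is `T₀`-invariant and absolutely continuous with respect to `μ₀`, hence equal to `μ₀`. So `μ` is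
extreme in `M(T₁, μ₀)` iff it is extreme among all `T₁`-invariant probability measures, i.e. iff
it is ergodic.
-/

open MeasureTheory Filter
open scoped ENNReal

/-- `M(T, μ₀)`: the set of `T`-invariant Borel probability measures projecting to `μ₀`
under the factor map `φ`. -/
def MInvProj {X Y : Type*} [MeasurableSpace X] [MeasurableSpace Y]
    (T : X → X) (φ : X → Y) (μ₀ : Measure Y) : Set (Measure X) :=
  {μ | IsProbabilityMeasure μ ∧ μ.map T = μ ∧ μ.map φ = μ₀}

open Function Set

theorem MeasureTheory.Measure.left_absolutelyContinuous_of_mem_openSegment {X : Type*}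
    [MeasurableSpace X] {μ ν₁ ν₂ : Measure X} (h : μ ∈ openSegment ℝ≥0∞ ν₁ ν₂) : ν₁ ≪ μ := by
  obtain ⟨a, b, ha, -, -, rfl⟩ := h
  exact (Measure.absolutelyContinuous_smul ha.ne').add_right _

theorem MeasureTheory.MeasurePreserving.map_of_semiconj {X Y : Type*} [MeasurableSpace X]
    [MeasurableSpace Y] {T : X → X} {S : Y → Y} {φ : X → Y} {ν : Measure X}
    (hT : MeasurePreserving T ν ν) (hφ : Measurable φ) (hS : Measurable S) (h : Semiconj φ T S) :
    MeasurePreserving S (ν.map φ) (ν.map φ) :=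
  ⟨hS, by rw [Measure.map_map hS hφ, ← h.comp_eq, ← Measure.map_map hφ hT.measurable, hT.map_eq]⟩

section MInvProj

variable {X Y : Type*} [MeasurableSpace X] [MeasurableSpace Y] {T : X → X} {S : Y → Y}
  {φ : X → Y} {μ₀ : Measure Y}

theorem convex_MInvProj (hT : Measurable T) (hφ : Measurable φ) :
    Convex ℝ≥0∞ (MInvProj T φ μ₀) := by
  rintro μ ⟨hμ, hμT, hμφ⟩ ν ⟨hν, hνT, hνφ⟩ a b - - hab
  refine ⟨⟨by simp [hab]⟩, ?_, ?_⟩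
  · rw [Measure.map_add _ _ hT, Measure.map_smul, Measure.map_smul, hμT, hνT]
  · rw [Measure.map_add _ _ hφ, Measure.map_smul, Measure.map_smul, hμφ, hνφ, ← add_smul, hab,
      one_smul]

theorem MInvProj_subset_setOf_measurePreserving (hT : Measurable T) :
    MInvProj T φ μ₀ ⊆ {ν | MeasurePreserving T ν ν ∧ IsProbabilityMeasure ν} :=
  fun _ hν => ⟨⟨hT, hν.2.1⟩, hν.1⟩

theorem mem_MInvProj_of_absolutelyContinuous [IsProbabilityMeasure μ₀] (hφ : Measurable φ)
    (h : Semiconj φ T S) (hμ₀ : Ergodic S μ₀) {μ ν : Measure X} (hμ : μ ∈ MInvProj T φ μ₀)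
    [IsProbabilityMeasure ν] (hν : MeasurePreserving T ν ν) (hνμ : ν ≪ μ) :
    ν ∈ MInvProj T φ μ₀ := by
  refine ⟨‹_›, hν.map_eq, ?_⟩
  have : IsProbabilityMeasure (ν.map φ) := Measure.isProbabilityMeasure_map hφ.aemeasurable
  refine hμ₀.eq_of_absolutelyContinuous (hν.map_of_semiconj hφ hμ₀.measurable h) ?_
  rw [← hμ.2.2]
  exact hνμ.map hφ

theorem mem_extremePoints_MInvProj_iff [IsProbabilityMeasure μ₀] (hT : Measurable T)
    (hφ : Measurable φ) (h : Semiconj φ T S) (hμ₀ : Ergodic S μ₀) {μ : Measure X}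
    (hμ : μ ∈ MInvProj T φ μ₀) : μ ∈ extremePoints ℝ≥0∞ (MInvProj T φ μ₀) ↔ Ergodic T μ := by
  have := hμ.1
  rw [Ergodic.iff_mem_extremePoints]
  have hsub := MInvProj_subset_setOf_measurePreserving (φ := φ) (μ₀ := μ₀) hT
  refine ⟨fun hext => ⟨hsub hμ, ?_⟩, fun herg =>
    inter_extremePoints_subset_extremePoints_of_subset hsub ⟨hμ, herg⟩⟩
  rintro ν₁ ⟨hν₁, _⟩ ν₂ ⟨hν₂, _⟩ hseg
  refine hext.2 ?_ ?_ hseg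
  · exact mem_MInvProj_of_absolutelyContinuous hφ h hμ₀ hμ hν₁
      (Measure.left_absolutelyContinuous_of_mem_openSegment hseg)
  · exact mem_MInvProj_of_absolutelyContinuous hφ h hμ₀ hμ hν₂
      (Measure.left_absolutelyContinuous_of_mem_openSegment (openSegment_symm ℝ≥0∞ ν₁ ν₂ ▸ hseg))

theorem isClosed_setOf_mem_MInvProj [TopologicalSpace X] [HasOuterApproxClosed X]
    [BorelSpace X] [TopologicalSpace Y] [HasOuterApproxClosed Y] [BorelSpace Y]
    [IsProbabilityMeasure μ₀] (hT : Continuous T) (hφ : Continuous φ) :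
    IsClosed {μ : ProbabilityMeasure X | (μ : Measure X) ∈ MInvProj T φ μ₀} := by
  let ν₀ : ProbabilityMeasure Y := ⟨μ₀, ‹_›⟩
  have hset : {μ : ProbabilityMeasure X | (μ : Measure X) ∈ MInvProj T φ μ₀} =
      {μ | μ.map hT.aemeasurable = μ} ∩ {μ | μ.map hφ.aemeasurable = ν₀} := by
    ext μ
    change _ ∧ _ ∧ _ ↔ _ = _ ∧ _ = _
    rw [← ProbabilityMeasure.toMeasure_injective.eq_iff,
      ← ProbabilityMeasure.toMeasure_injective.eq_iff, ProbabilityMeasure.toMeasure_map,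
      ProbabilityMeasure.toMeasure_map]
    exact and_iff_right μ.2
  rw [hset]
  exact (isClosed_eq (ProbabilityMeasure.continuous_map hT) continuous_id).inter
    (isClosed_eq (ProbabilityMeasure.continuous_map hφ) continuous_const)

end MInvProj

theorem MInvProj_convex_closed_extreme_general {G₁ : Type*} [Group G₁] [TopologicalSpace G₁]
    [IsTopologicalGroup G₁] [CompactSpace G₁] [TopologicalSpace.MetrizableSpace G₁]
    [MeasurableSpace G₁] [BorelSpace G₁]
    (G₂ : Subgroup G₁) [G₂.Normal] (hG₂closed : IsClosed (G₂ : Set G₁))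
    (T₁ : G₁ ≃ₜ G₁)
    (T₀ : G₁ ⧸ G₂ → G₁ ⧸ G₂)
    (hT₀ : ∀ x : G₁, T₀ (QuotientGroup.mk x) = QuotientGroup.mk (T₁ x))
    (μ₀ : Measure (G₁ ⧸ G₂)) [IsProbabilityMeasure μ₀] (hμ₀erg : Ergodic T₀ μ₀) :
    -- (1) `M(T₁, μ₀)` is convex
    (∀ μ ∈ MInvProj (⇑T₁) (QuotientGroup.mk (s := G₂)) μ₀,
      ∀ ν ∈ MInvProj (⇑T₁) (QuotientGroup.mk (s := G₂)) μ₀,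
      ∀ a b : ℝ≥0∞, a + b = 1 →
        a • μ + b • ν ∈ MInvProj (⇑T₁) (QuotientGroup.mk (s := G₂)) μ₀) ∧
    -- (2) `M(T₁, μ₀)` is closed in the weak* topology on Borel probability measures
    IsClosed {μ : ProbabilityMeasure G₁ |
      (μ : Measure G₁) ∈ MInvProj (⇑T₁) (QuotientGroup.mk (s := G₂)) μ₀} ∧
    -- (3) the extreme points of `M(T₁, μ₀)` are exactly its `T₁`-ergodic members
    (∀ μ ∈ MInvProj (⇑T₁) (QuotientGroup.mk (s := G₂)) μ₀,
      (Ergodic (⇑T₁) μ ↔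
        ∀ μ₁ ∈ MInvProj (⇑T₁) (QuotientGroup.mk (s := G₂)) μ₀,
        ∀ μ₂ ∈ MInvProj (⇑T₁) (QuotientGroup.mk (s := G₂)) μ₀,
        ∀ a b : ℝ≥0∞, 0 < a → 0 < b → a + b = 1 → μ = a • μ₁ + b • μ₂ →
          μ₁ = μ ∧ μ₂ = μ)) := by
  -- together with the local instance `hG₂closed`, makes `G₁ ⧸ G₂` a Borel space
  have : PolishSpace G₁ :=
    letI := TopologicalSpace.metrizableSpaceMetric G₁
    inferInstance
  have hπ : Measurable (QuotientGroup.mk : G₁ → G₁ ⧸ G₂) := QuotientGroup.measurable_coe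
  have hsemi : Semiconj (QuotientGroup.mk : G₁ → G₁ ⧸ G₂) T₁ T₀ := fun x => (hT₀ x).symm
  refine ⟨fun μ hμ ν hν a b hab => convex_MInvProj T₁.measurable hπ hμ hν zero_le zero_le hab,
    isClosed_setOf_mem_MInvProj T₁.continuous QuotientGroup.continuous_mk, fun μ hμ => ?_⟩
  rw [← mem_extremePoints_MInvProj_iff T₁.measurable hπ hsemi hμ₀erg hμ, mem_extremePoints]
  simp only [openSegment, hμ, true_and, mem_ofPred_eq, forall_exists_index, and_imp,
    @eq_comm _ μ]

/-- Lemma 3.1: in the group-extension setting (compact metrizable group `G₁`, closed normal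
subgroup `G₂`, homeomorphism `T₁` commuting with the `G₂`-action via the automorphism `T₂`,
induced map `T₀` on the quotient), if `μ₀ ∈ M(T₀)` is ergodic then `M(T₁, μ₀)` is convex,
weak*-closed, and its extreme points are exactly its `T₁`-ergodic members. -/
theorem MInvProj_convex_closed_extreme {G₁ : Type*} [Group G₁] [TopologicalSpace G₁]
    [IsTopologicalGroup G₁] [CompactSpace G₁] [TopologicalSpace.MetrizableSpace G₁]
    [MeasurableSpace G₁] [BorelSpace G₁]
    (G₂ : Subgroup G₁) [G₂.Normal] (hG₂closed : IsClosed (G₂ : Set G₁))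
    (T₁ : G₁ ≃ₜ G₁) (T₂ : G₂ ≃* G₂) (hT₂cont : Continuous T₂)
    (hcomm : ∀ (y : G₂) (x : G₁), T₁ ((y : G₁) * x) = (T₂ y : G₁) * T₁ x)
    (T₀ : G₁ ⧸ G₂ → G₁ ⧸ G₂)
    (hT₀ : ∀ x : G₁, T₀ (QuotientGroup.mk x) = QuotientGroup.mk (T₁ x))
    (μ₀ : Measure (G₁ ⧸ G₂)) [IsProbabilityMeasure μ₀] (hμ₀erg : Ergodic T₀ μ₀) :
    -- (1) `M(T₁, μ₀)` is convex
    (∀ μ ∈ MInvProj (⇑T₁) (QuotientGroup.mk (s := G₂)) μ₀,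
      ∀ ν ∈ MInvProj (⇑T₁) (QuotientGroup.mk (s := G₂)) μ₀,
      ∀ a b : ℝ≥0∞, a + b = 1 →
        a • μ + b • ν ∈ MInvProj (⇑T₁) (QuotientGroup.mk (s := G₂)) μ₀) ∧
    -- (2) `M(T₁, μ₀)` is closed in the weak* topology on Borel probability measures
    IsClosed {μ : ProbabilityMeasure G₁ |
      (μ : Measure G₁) ∈ MInvProj (⇑T₁) (QuotientGroup.mk (s := G₂)) μ₀} ∧
    -- (3) the extreme points of `M(T₁, μ₀)` are exactly its `T₁`-ergodic members
    (∀ μ ∈ MInvProj (⇑T₁) (QuotientGroup.mk (s := G₂)) μ₀,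
      (Ergodic (⇑T₁) μ ↔
        ∀ μ₁ ∈ MInvProj (⇑T₁) (QuotientGroup.mk (s := G₂)) μ₀,
        ∀ μ₂ ∈ MInvProj (⇑T₁) (QuotientGroup.mk (s := G₂)) μ₀,
        ∀ a b : ℝ≥0∞, 0 < a → 0 < b → a + b = 1 → μ = a • μ₁ + b • μ₂ →
          μ₁ = μ ∧ μ₂ = μ)) :=
  MInvProj_convex_closed_extreme_general G₂ hG₂closed T₁ T₀ hT₀ μ₀ hμ₀erg
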